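/- arXiv:1605.08101 — 11 statements merged into one kernel-verified Lean document; each statement's English description precedes it below -/
import Mathlib

section
/- Let f⋆ ∈ ℝ and c > 0. Let (φ_k)_{k∈ℕ} and (g_k)_{k∈ℕ} be real sequences such that for every k: g_k ≥ 0, φ_k ≥ f⋆, and φ_k − φ_{k+1} ≥ c·g_k². Then: (i) for every K ≥ 1, min_{0 ≤ k < K} g_k ≤ √((φ_0 − f⋆)/c)·(1/√K); (ii) for every ε > 0 there exists k ≤ ⌈(φ_0 − f⋆)/(c·ε²)⌉ with g_k ≤ ε; and (iii) g_k → 0 as k → ∞. -/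
/-!
Summing the sufficient-decrease inequalities telescopes to
`c * ∑_{k<K} g_k² ≤ φ_0 - φ_K ≤ φ_0 - f⋆`. Hence the smallest of the first `K` terms `g_k²` is at
most the average `(φ_0 - f⋆) / (c K)`, which gives the rate (i) and, with `K = ⌈(φ_0 - f⋆)/(c ε²)⌉ + 1`,
the complexity bound (ii); and `∑ g_k²` converges, so `g_k → 0`.
-/

open Filter Finset

section SufficientDecrease

variable {fstar c : ℝ} {φ g : ℕ → ℝ}

theorem sum_range_mul_sq_le_sub (hlb : ∀ k, fstar ≤ φ k)
    (hdec : ∀ k, φ k - φ (k + 1) ≥ c * g k ^ 2) (K : ℕ) :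
    ∑ k ∈ range K, c * g k ^ 2 ≤ φ 0 - fstar :=
  calc ∑ k ∈ range K, c * g k ^ 2
      ≤ ∑ k ∈ range K, (φ k - φ (k + 1)) := sum_le_sum fun k _ => hdec k
    _ = φ 0 - φ K := sum_range_sub' φ K
    _ ≤ φ 0 - fstar := by linarith [hlb K]

theorem exists_lt_abs_le_sqrt_div (hc : 0 < c) (hlb : ∀ k, fstar ≤ φ k)
    (hdec : ∀ k, φ k - φ (k + 1) ≥ c * g k ^ 2) {K : ℕ} (hK : 0 < K) :
    ∃ k < K, |g k| ≤ √((φ 0 - fstar) / (c * K)) := by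
  have hK' : (0 : ℝ) < K := Nat.cast_pos.2 hK
  have hsum : ∑ k ∈ range K, c * g k ^ 2 ≤ ∑ _k ∈ range K, (φ 0 - fstar) / K := by
    rw [sum_const, card_range, nsmul_eq_mul, mul_div_cancel₀ _ hK'.ne']
    exact sum_range_mul_sq_le_sub hlb hdec K
  obtain ⟨k, hk, hle⟩ := exists_le_of_sum_le (nonempty_range_iff.2 hK.ne') hsum
  refine ⟨k, mem_range.1 hk, ?_⟩
  rw [← Real.sqrt_sq_eq_abs]
  refine Real.sqrt_le_sqrt ?_
  rw [le_div_iff₀ (by positivity)]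
  rw [le_div_iff₀ hK'] at hle
  linarith

theorem exists_le_ceil_abs_le (hc : 0 < c) (hlb : ∀ k, fstar ≤ φ k)
    (hdec : ∀ k, φ k - φ (k + 1) ≥ c * g k ^ 2) {ε : ℝ} (hε : 0 < ε) :
    ∃ k ≤ ⌈(φ 0 - fstar) / (c * ε ^ 2)⌉₊, |g k| ≤ ε := by
  set N := ⌈(φ 0 - fstar) / (c * ε ^ 2)⌉₊
  obtain ⟨k, hk, hle⟩ := exists_lt_abs_le_sqrt_div hc hlb hdec N.succ_pos
  refine ⟨k, Nat.lt_succ_iff.1 hk, hle.trans (Real.sqrt_le_iff.2 ⟨hε.le, ?_⟩)⟩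
  have hN : (φ 0 - fstar) / (c * ε ^ 2) ≤ N := Nat.le_ceil _
  rw [div_le_iff₀ (by positivity)] at hN
  rw [div_le_iff₀ (by positivity)]
  push_cast
  nlinarith [mul_pos hc (pow_pos hε 2)]

theorem tendsto_zero_of_sufficient_decrease (hc : 0 < c) (hlb : ∀ k, fstar ≤ φ k)
    (hdec : ∀ k, φ k - φ (k + 1) ≥ c * g k ^ 2) : Tendsto g atTop (nhds 0) := by
  have hsummable : Summable fun k => c * g k ^ 2 :=
    summable_of_sum_range_le (fun k => by positivity) (sum_range_mul_sq_le_sub hlb hdec)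
  have hsqrt : Tendsto (fun k => √(c * g k ^ 2 / c)) atTop (nhds 0) := by
    simpa using ((hsummable.tendsto_atTop_zero).div_const c).sqrt
  rw [tendsto_zero_iff_abs_tendsto_zero]
  refine hsqrt.congr fun k => ?_
  rw [mul_div_cancel_left₀ _ hc.ne', Real.sqrt_sq_eq_abs, Function.comp_apply]

end SufficientDecrease

theorem stmt0_general (fstar c : ℝ) (hc : 0 < c) (φ g : ℕ → ℝ)
    (hlb : ∀ k, fstar ≤ φ k)
    (hdec : ∀ k, φ k - φ (k + 1) ≥ c * (g k) ^ 2) :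
    (∀ K : ℕ, 1 ≤ K → ∃ k < K, g k ≤ Real.sqrt ((φ 0 - fstar) / c) * (1 / Real.sqrt K)) ∧
    (∀ ε : ℝ, 0 < ε → ∃ k ≤ ⌈(φ 0 - fstar) / (c * ε ^ 2)⌉₊, g k ≤ ε) ∧
    Tendsto g atTop (nhds 0) := by
  refine ⟨fun K hK => ?_, fun ε hε => ?_, tendsto_zero_of_sufficient_decrease hc hlb hdec⟩
  · obtain ⟨k, hk, hle⟩ := exists_lt_abs_le_sqrt_div hc hlb hdec hK
    refine ⟨k, hk, (le_abs_self _).trans (hle.trans_eq ?_)⟩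
    rw [← div_div, Real.sqrt_div' _ (Nat.cast_nonneg K), div_eq_mul_one_div]
  · obtain ⟨k, hk, hle⟩ := exists_le_ceil_abs_le hc hlb hdec hε
    exact ⟨k, hk, (le_abs_self _).trans hle⟩

theorem stmt0 (fstar c : ℝ) (hc : 0 < c) (φ g : ℕ → ℝ)
    (hg : ∀ k, 0 ≤ g k) (hlb : ∀ k, fstar ≤ φ k)
    (hdec : ∀ k, φ k - φ (k + 1) ≥ c * (g k) ^ 2) :
    (∀ K : ℕ, 1 ≤ K → ∃ k < K, g k ≤ Real.sqrt ((φ 0 - fstar) / c) * (1 / Real.sqrt K)) ∧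
    (∀ ε : ℝ, 0 < ε → ∃ k ≤ ⌈(φ 0 - fstar) / (c * ε ^ 2)⌉₊, g k ≤ ε) ∧
    Tendsto g atTop (nhds 0) :=
  stmt0_general fstar c hc φ g hlb hdec
end

section
/- Let E be a real inner product space, f : E → ℝ, x, g, η⁰ ∈ E, and constants L > 0, c₁ ∈ (0,1), t̄ > 0, τ ∈ (0,1), c₂ ∈ (0,1], and 0 < c₃ ≤ c₄. Assume: |f(x + η) − f(x) − ⟪g, η⟫| ≤ (L/2)‖η‖² for all η ∈ E; ⟪−g, η⁰⟫ ≥ c₂‖g‖‖η⁰‖; and c₃‖g‖ ≤ ‖η⁰‖ ≤ c₄‖g‖. Then there is a least natural number i such that t := t̄·τ^i satisfies f(x) − f(x + t·η⁰) ≥ c₁ t ⟪−g, η⁰⟫, and this least i satisfies: (a) f(x) − f(x + t·η⁰) ≥ c₁ c₂ c₃ t ‖g‖²; (b) t ≥ min(t̄, 2τc₂(1 − c₁)/(c₄ L)); and (c) 1 + i ≤ max(1, 2 + ⌈log_{1/τ}(c₄ t̄ L/(2 c₂ (1 − c₁)))⌉). -/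
/-!
For a step `t` along `η₀`, the quadratic upper bound on `f` gives the Armijo decrease as soon as
`L t ‖η₀‖² ≤ 2 (1 - c₁) ⟪-g, η₀⟫`, and the angle and length conditions on `η₀` guarantee this for
every `t ≤ T := 2 c₂ (1 - c₁) / (c₄ L)`. Backtracking from `tbar` therefore stops at the first
`tbar τ^i ≤ T` at the latest: the accepted step is either `tbar` or `τ` times a rejected step
exceeding `T`, and a rejected step `tbar τ^n > T` forces `n < log_{1/τ} (tbar / T)`.
-/

open RealInnerProductSpace

section Backtracking

variable {P : ℝ → Prop} {T tbar τ : ℝ}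

theorem exists_backtrack_of_forall_le (hP : ∀ t, 0 < t → t ≤ T → P t) (hT : 0 < T)
    (htbar : 0 < tbar) (hτ0 : 0 < τ) (hτ1 : τ < 1) : ∃ i : ℕ, P (tbar * τ ^ i) := by
  obtain ⟨n, hn⟩ := exists_pow_lt_of_lt_one (div_pos hT htbar) hτ1
  refine ⟨n, hP _ (by positivity) ?_⟩
  rw [lt_div_iff₀' htbar] at hn
  exact hn.le

theorem lt_of_not_backtrack (hP : ∀ t, 0 < t → t ≤ T → P t) (htbar : 0 < tbar) (hτ0 : 0 < τ)
    {n : ℕ} (hn : ¬ P (tbar * τ ^ n)) : T < tbar * τ ^ n :=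
  not_le.1 fun h => hn (hP _ (by positivity) h)

theorem min_le_of_forall_lt_not_backtrack (hP : ∀ t, 0 < t → t ≤ T → P t) (htbar : 0 < tbar)
    (hτ0 : 0 < τ) {i : ℕ} (hmin : ∀ j < i, ¬ P (tbar * τ ^ j)) :
    min tbar (τ * T) ≤ tbar * τ ^ i := by
  cases i with
  | zero => simp
  | succ n =>
    have hT := lt_of_not_backtrack hP htbar hτ0 (hmin n n.lt_succ_self)
    calc min tbar (τ * T) ≤ τ * T := min_le_right _ _
      _ ≤ τ * (tbar * τ ^ n) := by gcongr
      _ = tbar * τ ^ (n + 1) := by ring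

theorem lt_logb_inv_of_lt_mul_pow (hT : 0 < T) (hτ0 : 0 < τ) (hτ1 : τ < 1) {n : ℕ}
    (h : T < tbar * τ ^ n) : (n : ℝ) < Real.logb τ⁻¹ (tbar / T) := by
  have hτn : 0 < τ ^ n := pow_pos hτ0 n
  have htbar : 0 < tbar := by nlinarith
  rwa [Real.lt_logb_iff_rpow_lt ((one_lt_inv₀ hτ0).2 hτ1) (div_pos htbar hT), Real.rpow_natCast,
    inv_pow, inv_lt_iff_one_lt_mul₀ hτn, div_mul_eq_mul_div, one_lt_div hT]

theorem le_max_ceil_logb_of_forall_lt_not_backtrack (hP : ∀ t, 0 < t → t ≤ T → P t)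
    (hT : 0 < T) (htbar : 0 < tbar) (hτ0 : 0 < τ) (hτ1 : τ < 1) {i : ℕ}
    (hmin : ∀ j < i, ¬ P (tbar * τ ^ j)) :
    (i : ℤ) ≤ max 0 ⌈Real.logb τ⁻¹ (tbar / T)⌉ := by
  cases i with
  | zero => simp
  | succ n =>
    have hlog := lt_logb_inv_of_lt_mul_pow hT hτ0 hτ1
      (lt_of_not_backtrack hP htbar hτ0 (hmin n n.lt_succ_self))
    have hceil : (n : ℤ) < ⌈Real.logb τ⁻¹ (tbar / T)⌉ := Int.lt_ceil.2 (mod_cast hlog)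
    push_cast
    exact le_max_of_le_right (by omega)

end Backtracking

section Armijo

variable {E : Type*} [NormedAddCommGroup E] [InnerProductSpace ℝ E]
  {f : E → ℝ} {x g η : E} {L c₁ c₂ c₃ c₄ t : ℝ}

def ArmijoCondition (f : E → ℝ) (x g η : E) (c₁ t : ℝ) : Prop :=
  f x - f (x + t • η) ≥ c₁ * t * ⟪-g, η⟫

theorem armijoCondition_of_mul_norm_sq_le
    (hf : ∀ η, f (x + η) ≤ f x + ⟪g, η⟫ + L / 2 * ‖η‖ ^ 2)
    (ht : 0 ≤ t) (hsmall : L * t * ‖η‖ ^ 2 ≤ 2 * (1 - c₁) * ⟪-g, η⟫) :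
    ArmijoCondition f x g η c₁ t := by
  have hstep := hf (t • η)
  rw [norm_smul, Real.norm_of_nonneg ht, real_inner_smul_right] at hstep
  rw [inner_neg_left] at hsmall
  unfold ArmijoCondition
  rw [inner_neg_left]
  nlinarith [mul_le_mul_of_nonneg_left hsmall ht]

theorem mul_norm_sq_le_of_le_div (hangle : ⟪-g, η⟫ ≥ c₂ * ‖g‖ * ‖η‖) (hlen : ‖η‖ ≤ c₄ * ‖g‖)
    (hc₁ : c₁ ≤ 1) (hL : 0 < L) (hc₄ : 0 < c₄) (ht0 : 0 ≤ t)
    (ht : t ≤ 2 * c₂ * (1 - c₁) / (c₄ * L)) :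
    L * t * ‖η‖ ^ 2 ≤ 2 * (1 - c₁) * ⟪-g, η⟫ := by
  have htc : c₄ * L * t ≤ 2 * c₂ * (1 - c₁) := by rwa [le_div_iff₀' (by positivity)] at ht
  have hgη : 0 ≤ ‖g‖ * ‖η‖ := by positivity
  calc L * t * ‖η‖ ^ 2 ≤ L * t * (c₄ * ‖g‖ * ‖η‖) := by
        rw [sq]; gcongr
    _ = c₄ * L * t * (‖g‖ * ‖η‖) := by ring
    _ ≤ 2 * c₂ * (1 - c₁) * (‖g‖ * ‖η‖) := by gcongr
    _ = 2 * (1 - c₁) * (c₂ * ‖g‖ * ‖η‖) := by ring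
    _ ≤ 2 * (1 - c₁) * ⟪-g, η⟫ := by gcongr

theorem le_inner_neg_of_angle (hangle : ⟪-g, η⟫ ≥ c₂ * ‖g‖ * ‖η‖)
    (hlen : c₃ * ‖g‖ ≤ ‖η‖) (hc₂ : 0 ≤ c₂) : c₂ * c₃ * ‖g‖ ^ 2 ≤ ⟪-g, η⟫ :=
  calc c₂ * c₃ * ‖g‖ ^ 2 = c₂ * ‖g‖ * (c₃ * ‖g‖) := by ring
    _ ≤ c₂ * ‖g‖ * ‖η‖ := by gcongr
    _ ≤ ⟪-g, η⟫ := hangle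

end Armijo

theorem stmt3 {E : Type*} [NormedAddCommGroup E] [InnerProductSpace ℝ E]
    (f : E → ℝ) (x g η₀ : E)
    (L c₁ tbar τ c₂ c₃ c₄ : ℝ)
    (hL : 0 < L) (hc₁ : c₁ ∈ Set.Ioo (0 : ℝ) 1) (htbar : 0 < tbar)
    (hτ : τ ∈ Set.Ioo (0 : ℝ) 1) (hc₂ : c₂ ∈ Set.Ioc (0 : ℝ) 1)
    (hc₃ : 0 < c₃) (hc₃₄ : c₃ ≤ c₄)
    (hlip : ∀ η : E, |f (x + η) - f x - ⟪g, η⟫| ≤ L / 2 * ‖η‖ ^ 2)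
    (hangle : ⟪-g, η₀⟫ ≥ c₂ * ‖g‖ * ‖η₀‖)
    (hlen₁ : c₃ * ‖g‖ ≤ ‖η₀‖) (hlen₂ : ‖η₀‖ ≤ c₄ * ‖g‖) :
    ∃ i : ℕ,
      (f x - f (x + (tbar * τ ^ i) • η₀) ≥ c₁ * (tbar * τ ^ i) * ⟪-g, η₀⟫) ∧
      (∀ j < i, ¬ (f x - f (x + (tbar * τ ^ j) • η₀) ≥ c₁ * (tbar * τ ^ j) * ⟪-g, η₀⟫)) ∧
      (f x - f (x + (tbar * τ ^ i) • η₀) ≥ c₁ * c₂ * c₃ * (tbar * τ ^ i) * ‖g‖ ^ 2) ∧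
      (tbar * τ ^ i ≥ min tbar (2 * τ * c₂ * (1 - c₁) / (c₄ * L))) ∧
      ((1 + i : ℤ) ≤ max 1 (2 + ⌈Real.logb τ⁻¹ (c₄ * tbar * L / (2 * c₂ * (1 - c₁)))⌉)) := by
  classical
  obtain ⟨hc₁0, hc₁1⟩ := hc₁
  obtain ⟨hτ0, hτ1⟩ := hτ
  have hc₄ : 0 < c₄ := hc₃.trans_le hc₃₄
  set T := 2 * c₂ * (1 - c₁) / (c₄ * L) with hT_def
  have hT : 0 < T := div_pos (mul_pos (mul_pos two_pos hc₂.1) (sub_pos.2 hc₁1)) (by positivity)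
  have hP : ∀ t, 0 < t → t ≤ T → ArmijoCondition f x g η₀ c₁ t := fun t ht htT =>
    armijoCondition_of_mul_norm_sq_le (fun η => by linarith [(abs_le.1 (hlip η)).2]) ht.le
      (mul_norm_sq_le_of_le_div hangle hlen₂ hc₁1.le hL hc₄ ht.le htT)
  have hex := exists_backtrack_of_forall_le hP hT htbar hτ0 hτ1
  have hmin : ∀ j < Nat.find hex, ¬ ArmijoCondition f x g η₀ c₁ (tbar * τ ^ j) :=
    fun j => Nat.find_min hex
  refine ⟨Nat.find hex, Nat.find_spec hex, hmin, ?_, ?_, ?_⟩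
  · have hstep : 0 ≤ c₁ * (tbar * τ ^ Nat.find hex) := by positivity
    calc c₁ * c₂ * c₃ * (tbar * τ ^ Nat.find hex) * ‖g‖ ^ 2
        = c₁ * (tbar * τ ^ Nat.find hex) * (c₂ * c₃ * ‖g‖ ^ 2) := by ring
      _ ≤ c₁ * (tbar * τ ^ Nat.find hex) * ⟪-g, η₀⟫ := 
          mul_le_mul_of_nonneg_left (le_inner_neg_of_angle hangle hlen₁ hc₂.1.le) hstep
      _ ≤ f x - f (x + (tbar * τ ^ Nat.find hex) • η₀) := Nat.find_spec hex
  · have hτT : 2 * τ * c₂ * (1 - c₁) / (c₄ * L) = τ * T := by rw [hT_def]; ring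
    rw [hτT]
    exact min_le_of_forall_lt_not_backtrack hP htbar hτ0 hmin
  · have htbarT : c₄ * tbar * L / (2 * c₂ * (1 - c₁)) = tbar / T := by
      rw [hT_def, div_div_eq_mul_div]; ring
    have hcount := le_max_ceil_logb_of_forall_lt_not_backtrack hP hT htbar hτ0 hτ1 hmin
    rw [htbarT]
    omega
end

section
/- Let E be a real Hilbert space and f : E → ℝ differentiable with gradient ∇f. Assume there are f⋆ ∈ ℝ and L > 0 with f(x) ≥ f⋆ for all x and |f(x + η) − f(x) − ⟪∇f(x), η⟫| ≤ (L/2)‖η‖² for all x, η ∈ E. Fix c₁ ∈ (0,1), τ ∈ (0,1), t̄ > 0 and x_0 ∈ E, and define iterates x_{k+1} = x_k − t_k ∇f(x_k), where t_k = t̄·τ^{i_k} and i_k is the least natural number i such that f(x_k) − f(x_k − t̄ τ^i ∇f(x_k)) ≥ c₁ t̄ τ^i ‖∇f(x_k)‖². Then for every ε > 0 there exists k ≤ ⌈(f(x_0) − f⋆)/(c₁ · min(t̄, 2τ(1 − c₁)/L) · ε²)⌉ with ‖∇f(x_k)‖ ≤ ε and f(x_k) ≤ f(x_0). -/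
/-!
The quadratic upper bound shows that the Armijo condition holds for every step
`s ≤ 2(1 - c₁)/L`; since backtracking only shrinks the step after the condition has failed
at the previous trial step, every accepted step is at least `min t̄ (2τ(1 - c₁)/L)`.
Each iteration therefore decreases `f` by at least `c₁ · min t̄ (2τ(1 - c₁)/L) · ‖∇f(x_k)‖²`,
and as `f ≥ f⋆` this decrease can exceed `c₁ · min t̄ (2τ(1 - c₁)/L) · ε²` only finitely often.
-/

open RealInnerProductSpace Finset

theorem exists_le_ceil_sub_succ_lt {a : ℕ → ℝ} {m D : ℝ} (hD : 0 < D) (hm : ∀ k, m ≤ a k) :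
    ∃ k ≤ ⌈(a 0 - m) / D⌉₊, a k - a (k + 1) < D := by
  set K := ⌈(a 0 - m) / D⌉₊
  by_contra! hdecr
  have htelescope : ((K + 1 : ℕ) : ℝ) * D ≤ a 0 - a (K + 1) := by
    have hsum := card_nsmul_le_sum (range (K + 1)) (fun k => a k - a (k + 1)) D
      fun k hk => hdecr k (Nat.lt_succ_iff.mp (mem_range.mp hk))
    rwa [card_range, sum_range_sub', nsmul_eq_mul] at hsum
  have hK : ((K + 1 : ℕ) : ℝ) ≤ (a 0 - m) / D := by
    rw [le_div_iff₀ hD]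
    linarith [hm (K + 1)]
  push_cast at hK
  linarith [Nat.le_ceil ((a 0 - m) / D)]

theorem min_le_backtracking_step {P : ℝ → Prop} {tbar τ δ : ℝ} {i : ℕ}
    (htbar : 0 ≤ tbar) (hτ : 0 ≤ τ) (hP : ∀ s, 0 ≤ s → s ≤ δ → P s)
    (hfail : ∀ j < i, ¬ P (tbar * τ ^ j)) :
    min tbar (τ * δ) ≤ tbar * τ ^ i := by
  cases i with
  | zero => simp
  | succ j =>
    have hδ : δ < tbar * τ ^ j := by
      by_contra! h
      exact hfail j j.lt_succ_self (hP _ (by positivity) h)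
    calc min tbar (τ * δ) ≤ τ * δ := min_le_right _ _
      _ ≤ τ * (tbar * τ ^ j) := mul_le_mul_of_nonneg_left hδ.le hτ
      _ = tbar * τ ^ (j + 1) := by ring

theorem armijo_of_quadratic_upper_bound {E : Type*} [NormedAddCommGroup E]
    [InnerProductSpace ℝ E] {f : E → ℝ} {x g : E} {L c₁ s : ℝ}
    (hup : ∀ η, f (x + η) - f x - ⟪g, η⟫ ≤ L / 2 * ‖η‖ ^ 2)
    (hs : 0 ≤ s) (hsL : L * s ≤ 2 * (1 - c₁)) :
    c₁ * s * ‖g‖ ^ 2 ≤ f x - f (x - s • g) := by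
  have hquad := hup (-(s • g))
  rw [← sub_eq_add_neg, inner_neg_right, real_inner_smul_right, real_inner_self_eq_norm_sq,
    norm_neg, norm_smul, Real.norm_of_nonneg hs] at hquad
  nlinarith [mul_nonneg hs (sq_nonneg ‖g‖)]

theorem stmt4_general {E : Type*} [NormedAddCommGroup E] [InnerProductSpace ℝ E]
    (f : E → ℝ) (G : E → E)
    (fstar L c₁ τ tbar : ℝ) (hL : 0 < L)
    (hlb : ∀ x, fstar ≤ f x)
    (hlip : ∀ x η : E, |f (x + η) - f x - ⟪G x, η⟫| ≤ L / 2 * ‖η‖ ^ 2)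
    (hc₁ : c₁ ∈ Set.Ioo (0 : ℝ) 1) (hτ : τ ∈ Set.Ioo (0 : ℝ) 1) (htbar : 0 < tbar)
    (x₀ : E) (x : ℕ → E) (i : ℕ → ℕ) (hx0 : x 0 = x₀)
    (hmin : ∀ k,
      (f (x k) - f (x k - (tbar * τ ^ (i k)) • G (x k)) ≥
        c₁ * (tbar * τ ^ (i k)) * ‖G (x k)‖ ^ 2) ∧
      (∀ j < i k, ¬ (f (x k) - f (x k - (tbar * τ ^ j) • G (x k)) ≥
        c₁ * (tbar * τ ^ j) * ‖G (x k)‖ ^ 2)))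
    (hiter : ∀ k, x (k + 1) = x k - (tbar * τ ^ (i k)) • G (x k)) :
    ∀ ε : ℝ, 0 < ε →
      ∃ k ≤ ⌈(f x₀ - fstar) / (c₁ * min tbar (2 * τ * (1 - c₁) / L) * ε ^ 2)⌉₊,
        ‖G (x k)‖ ≤ ε ∧ f (x k) ≤ f x₀ := by
  intro ε hε
  obtain ⟨hc₁0, hc₁1⟩ := hc₁
  set tmin := min tbar (2 * τ * (1 - c₁) / L)
  have htmin : 0 < tmin := lt_min htbar (div_pos (by nlinarith [hτ.1]) hL)
  have hstep : ∀ k, tmin ≤ tbar * τ ^ i k := fun k => by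
    have hbound := min_le_backtracking_step htbar.le hτ.1.le (fun s hs hsL =>
      armijo_of_quadratic_upper_bound (fun η => (le_abs_self _).trans (hlip (x k) η)) hs
        ((le_div_iff₀' hL).mp hsL)) (hmin k).2
    rwa [← mul_div_assoc, ← mul_assoc, mul_comm τ 2] at hbound
  have hdecr : ∀ k, c₁ * tmin * ‖G (x k)‖ ^ 2 ≤ f (x k) - f (x (k + 1)) := fun k => by
    rw [hiter k]
    refine le_trans ?_ (hmin k).1
    gcongr
    exact hstep k
  have hanti : Antitone (f ∘ x) := antitone_nat_of_succ_le fun k => by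
    have hnonneg : 0 ≤ c₁ * tmin * ‖G (x k)‖ ^ 2 := by positivity
    simp only [Function.comp]
    linarith [hdecr k]
  obtain ⟨k, hk, hsmall⟩ := exists_le_ceil_sub_succ_lt (a := f ∘ x)
    (by positivity : 0 < c₁ * tmin * ε ^ 2) (fun k => hlb (x k))
  refine ⟨k, by simpa [hx0] using hk, ?_, by simpa [hx0] using hanti (Nat.zero_le k)⟩
  by_contra! hlarge
  have hbig : c₁ * tmin * ε ^ 2 < c₁ * tmin * ‖G (x k)‖ ^ 2 := by gcongr
  simp only [Function.comp] at hsmall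
  linarith [hdecr k]

theorem stmt4 {E : Type*} [NormedAddCommGroup E] [InnerProductSpace ℝ E] [CompleteSpace E]
    (f : E → ℝ) (G : E → E) (hgrad : ∀ x, HasGradientAt f (G x) x)
    (fstar L c₁ τ tbar : ℝ) (hL : 0 < L)
    (hlb : ∀ x, fstar ≤ f x)
    (hlip : ∀ x η : E, |f (x + η) - f x - ⟪G x, η⟫| ≤ L / 2 * ‖η‖ ^ 2)
    (hc₁ : c₁ ∈ Set.Ioo (0 : ℝ) 1) (hτ : τ ∈ Set.Ioo (0 : ℝ) 1) (htbar : 0 < tbar)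
    (x₀ : E) (x : ℕ → E) (i : ℕ → ℕ) (hx0 : x 0 = x₀)
    (hmin : ∀ k,
      (f (x k) - f (x k - (tbar * τ ^ (i k)) • G (x k)) ≥
        c₁ * (tbar * τ ^ (i k)) * ‖G (x k)‖ ^ 2) ∧
      (∀ j < i k, ¬ (f (x k) - f (x k - (tbar * τ ^ j) • G (x k)) ≥
        c₁ * (tbar * τ ^ j) * ‖G (x k)‖ ^ 2)))
    (hiter : ∀ k, x (k + 1) = x k - (tbar * τ ^ (i k)) • G (x k)) :
    ∀ ε : ℝ, 0 < ε →
      ∃ k ≤ ⌈(f x₀ - fstar) / (c₁ * min tbar (2 * τ * (1 - c₁) / L) * ε ^ 2)⌉₊,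
        ‖G (x k)‖ ≤ ε ∧ f (x k) ≤ f x₀ :=
  stmt4_general f G fstar L c₁ τ tbar hL hlb hlip hc₁ hτ htbar x₀ x i hx0 hmin hiter
end

section
/- Let E be a real inner product space, g ∈ E with g ≠ 0, Δ > 0 and c₀ > 0. Let H : E → E be positively homogeneous (H(αη) = α·H(η) for all α ≥ 0 and η ∈ E) and satisfy ⟪η, H(η)⟫ ≤ c₀‖η‖² for all η ∈ E. Define the model m(η) = ⟪η, g⟫ + (1/2)⟪η, H(η)⟫, set κ = ⟪−g, H(−g)⟫, and define the Cauchy step η^C = −α^C·g where α^C = min(‖g‖²/κ, Δ/‖g‖) if κ > 0 and α^C = Δ/‖g‖ otherwise. Then ‖η^C‖ ≤ Δ and m(0) − m(η^C) ≥ (1/2)·min(Δ, ‖g‖/c₀)·‖g‖. -/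
/-!
Along the ray `t ↦ t • (-g)`, `t ≥ 0`, positive homogeneity of `H` turns the model into the
scalar quadratic `m (t • -g) = -t ‖g‖² + t² κ / 2`. The Cauchy step length `α` satisfies
`α κ ≤ ‖g‖²`, so the decrease `α ‖g‖² - α² κ / 2` is at least `α ‖g‖² / 2`; and since
`κ ≤ c₀ ‖g‖²`, the step `α ‖g‖` is at least `min Δ (‖g‖ / c₀)`.
-/

open RealInnerProductSpace

/-- The Cauchy step length along `-g` for `n = ‖g‖` and curvature `κ = ⟪-g, H (-g)⟫`. -/
noncomputable def cauchyStepLength (n κ Δ : ℝ) : ℝ :=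
  if 0 < κ then min (n ^ 2 / κ) (Δ / n) else Δ / n

section CauchyStepLength

variable {n κ Δ : ℝ}

theorem cauchyStepLength_nonneg (hn : 0 ≤ n) (hΔ : 0 ≤ Δ) : 0 ≤ cauchyStepLength n κ Δ := by
  unfold cauchyStepLength
  split_ifs with hκ
  · exact le_min (by positivity) (by positivity)
  · positivity

theorem cauchyStepLength_le_div : cauchyStepLength n κ Δ ≤ Δ / n := by
  unfold cauchyStepLength
  split_ifs
  · exact min_le_right _ _
  · exact le_rfl

theorem cauchyStepLength_mul_le (hn : 0 < n) : cauchyStepLength n κ Δ * n ≤ Δ :=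
  calc cauchyStepLength n κ Δ * n ≤ Δ / n * n := by gcongr; exact cauchyStepLength_le_div
    _ = Δ := div_mul_cancel₀ Δ hn.ne'

theorem cauchyStepLength_mul_curvature_le (hn : 0 ≤ n) (hΔ : 0 ≤ Δ) :
    cauchyStepLength n κ Δ * κ ≤ n ^ 2 := by
  by_cases hκ : 0 < κ
  · calc cauchyStepLength n κ Δ * κ ≤ n ^ 2 / κ * κ := by
          gcongr; rw [cauchyStepLength, if_pos hκ]; exact min_le_left _ _
      _ = n ^ 2 := div_mul_cancel₀ _ hκ.ne'
  · have := cauchyStepLength_nonneg (κ := κ) hn hΔ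
    nlinarith

theorem min_le_cauchyStepLength_mul {c : ℝ} (hn : 0 < n) (hc : 0 < c) (hκ : κ ≤ c * n ^ 2) :
    min Δ (n / c) ≤ cauchyStepLength n κ Δ * n := by
  unfold cauchyStepLength
  split_ifs with hκ_pos
  · rw [min_mul_of_nonneg _ _ hn.le, div_mul_cancel₀ Δ hn.ne', min_comm]
    refine min_le_min ?_ le_rfl
    rw [div_mul_eq_mul_div, div_le_div_iff₀ hc hκ_pos]
    nlinarith
  · rw [div_mul_cancel₀ Δ hn.ne']
    exact min_le_left _ _

theorem half_min_mul_le_cauchy_decrease {c : ℝ} (hn : 0 < n) (hΔ : 0 ≤ Δ) (hc : 0 < c)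
    (hκ : κ ≤ c * n ^ 2) :
    1 / 2 * min Δ (n / c) * n ≤
      cauchyStepLength n κ Δ * n ^ 2 - 1 / 2 * cauchyStepLength n κ Δ ^ 2 * κ := by
  have hαn := min_le_cauchyStepLength_mul (Δ := Δ) hn hc hκ
  have hακ := cauchyStepLength_mul_curvature_le (κ := κ) hn.le hΔ
  have hα := cauchyStepLength_nonneg (κ := κ) hn.le hΔ
  nlinarith [mul_le_mul_of_nonneg_left hακ hα]

end CauchyStepLength

theorem inner_smul_apply_smul_of_nonneg {E : Type*} [NormedAddCommGroup E]
    [InnerProductSpace ℝ E] {H : E → E} (hhom : ∀ α : ℝ, 0 ≤ α → ∀ η : E, H (α • η) = α • H η)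
    {t : ℝ} (ht : 0 ≤ t) (v : E) : ⟪t • v, H (t • v)⟫ = t ^ 2 * ⟪v, H v⟫ := by
  rw [hhom t ht, real_inner_smul_left, real_inner_smul_right]
  ring

theorem stmt7 {E : Type*} [NormedAddCommGroup E] [InnerProductSpace ℝ E]
    (g : E) (hg : g ≠ 0) (Δ c₀ : ℝ) (hΔ : 0 < Δ) (hc₀ : 0 < c₀)
    (H : E → E)
    (hhom : ∀ (α : ℝ), 0 ≤ α → ∀ η : E, H (α • η) = α • H η)
    (hbound : ∀ η : E, ⟪η, H η⟫ ≤ c₀ * ‖η‖ ^ 2)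
    (m : E → ℝ) (hm : ∀ η, m η = ⟪η, g⟫ + 1 / 2 * ⟪η, H η⟫)
    (κ : ℝ) (hκ : κ = ⟪-g, H (-g)⟫)
    (αC : ℝ) (hαC : αC = if 0 < κ then min (‖g‖ ^ 2 / κ) (Δ / ‖g‖) else Δ / ‖g‖)
    (ηC : E) (hηC : ηC = -(αC • g)) :
    ‖ηC‖ ≤ Δ ∧ m 0 - m ηC ≥ 1 / 2 * min Δ (‖g‖ / c₀) * ‖g‖ := by
  have hg_pos : 0 < ‖g‖ := norm_pos_iff.mpr hg
  have hα : αC = cauchyStepLength ‖g‖ κ Δ := hαC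
  have hα_nonneg : 0 ≤ αC := hα ▸ cauchyStepLength_nonneg hg_pos.le hΔ.le
  have hηC' : ηC = αC • -g := by rw [hηC, smul_neg]
  have hκ_le : κ ≤ c₀ * ‖g‖ ^ 2 := by simpa only [hκ, norm_neg] using hbound (-g)
  have hdecrease : m 0 - m ηC = αC * ‖g‖ ^ 2 - 1 / 2 * αC ^ 2 * κ := by
    rw [hm, hm, hηC', inner_smul_apply_smul_of_nonneg hhom hα_nonneg, ← hκ, real_inner_smul_left,
      inner_neg_left, real_inner_self_eq_norm_sq, inner_zero_left, inner_zero_left]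
    ring
  constructor
  · rw [hηC', norm_smul, norm_neg, Real.norm_of_nonneg hα_nonneg, hα]
    exact cauchyStepLength_mul_le hg_pos
  · rw [hdecrease, hα]
    exact half_min_mul_le_cauchy_decrease hg_pos hΔ.le hc₀ hκ_le
end

section
/- Let E be a finite-dimensional real inner product space, g ∈ E, Δ > 0, ε_H > 0, and let H : E → E be a symmetric linear map (⟪H u, v⟫ = ⟪u, H v⟫ for all u, v) whose least eigenvalue is smaller than −ε_H, i.e., there exists w ≠ 0 with ⟪w, H w⟫ < −ε_H‖w‖². Then there exists u ∈ E with ‖u‖ = 1, ⟪u, g⟫ ≤ 0 and ⟪u, H u⟫ < −ε_H; moreover, for the eigenstep η^E = Δ·u, the model m(η) = ⟪η, g⟫ + (1/2)⟪η, H(η)⟫ satisfies m(0) − m(η^E) ≥ (1/2)·Δ²·ε_H. -/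
/-!
Normalize a direction of curvature below `-εH` and, replacing it by its negative if needed,
make it a non-ascent direction for `g`; the quadratic form is even, so the curvature survives
the sign flip, and along `Δ • u` the linear term of the model is then nonpositive while the
quadratic term alone contributes the decrease `Δ² εH / 2`.
-/

open RealInnerProductSpace

section EigenStep

variable {E : Type*} [NormedAddCommGroup E] [InnerProductSpace ℝ E]

lemma exists_norm_eq_one_inner_map_self_lt {H : E →ₗ[ℝ] E} {c : ℝ} {w : E} (hw : w ≠ 0)
    (hwH : ⟪w, H w⟫ < c * ‖w‖ ^ 2) : ∃ v : E, ‖v‖ = 1 ∧ ⟪v, H v⟫ < c := by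
  have hwn : 0 < ‖w‖ := norm_pos_iff.mpr hw
  refine ⟨‖w‖⁻¹ • w, by simp [norm_smul, hwn.ne'], ?_⟩
  have hscale : ⟪‖w‖⁻¹ • w, H (‖w‖⁻¹ • w)⟫ = ⟪w, H w⟫ / ‖w‖ ^ 2 := by
    simp only [map_smul, real_inner_smul_left, real_inner_smul_right]
    field_simp
  rw [hscale, div_lt_iff₀ (by positivity)]
  exact hwH

lemma exists_norm_eq_inner_nonpos_inner_map_self_eq (H : E →ₗ[ℝ] E) (g v : E) :
    ∃ u : E, ‖u‖ = ‖v‖ ∧ ⟪u, g⟫ ≤ 0 ∧ ⟪u, H u⟫ = ⟪v, H v⟫ := by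
  rcases le_total ⟪v, g⟫ 0 with hvg | hvg
  · exact ⟨v, rfl, hvg, rfl⟩
  · exact ⟨-v, norm_neg v, by simpa [inner_neg_left] using hvg, by simp [inner_neg_left]⟩

lemma inner_smul_add_half_inner_map_smul_le {H : E →ₗ[ℝ] E} {g u : E} {Δ c : ℝ}
    (hΔ : 0 ≤ Δ) (hug : ⟪u, g⟫ ≤ 0) (huH : ⟪u, H u⟫ ≤ -c) :
    ⟪Δ • u, g⟫ + 1 / 2 * ⟪Δ • u, H (Δ • u)⟫ ≤ -(1 / 2 * Δ ^ 2 * c) := by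
  simp only [map_smul, real_inner_smul_left, real_inner_smul_right]
  nlinarith [mul_nonpos_of_nonneg_of_nonpos hΔ hug,
    mul_le_mul_of_nonneg_left huH (sq_nonneg Δ)]

end EigenStep

theorem stmt8_general {E : Type*} [NormedAddCommGroup E] [InnerProductSpace ℝ E]
    (g : E) (Δ εH : ℝ) (hΔ : 0 < Δ)
    (H : E →ₗ[ℝ] E)
    (hneg : ∃ w : E, w ≠ 0 ∧ ⟪w, H w⟫ < -εH * ‖w‖ ^ 2)
    (m : E → ℝ) (hm : ∀ η, m η = ⟪η, g⟫ + 1 / 2 * ⟪η, H η⟫) :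
    ∃ u : E, ‖u‖ = 1 ∧ ⟪u, g⟫ ≤ 0 ∧ ⟪u, H u⟫ < -εH ∧
      m 0 - m (Δ • u) ≥ 1 / 2 * Δ ^ 2 * εH := by
  obtain ⟨w, hw, hwH⟩ := hneg
  obtain ⟨v, hv, hvH⟩ := exists_norm_eq_one_inner_map_self_lt hw hwH
  obtain ⟨u, hu, hug, huH⟩ := exists_norm_eq_inner_nonpos_inner_map_self_eq H g v
  rw [← huH] at hvH
  have hdecrease := inner_smul_add_half_inner_map_smul_le hΔ.le hug hvH.le
  refine ⟨u, hu.trans hv, hug, hvH, ?_⟩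
  simp only [hm, inner_zero_left, map_zero, mul_zero, add_zero]
  linarith

theorem stmt8 {E : Type*} [NormedAddCommGroup E] [InnerProductSpace ℝ E]
    [FiniteDimensional ℝ E]
    (g : E) (Δ εH : ℝ) (hΔ : 0 < Δ) (hεH : 0 < εH)
    (H : E →ₗ[ℝ] E) (hsym : ∀ u v : E, ⟪H u, v⟫ = ⟪u, H v⟫)
    (hneg : ∃ w : E, w ≠ 0 ∧ ⟪w, H w⟫ < -εH * ‖w‖ ^ 2)
    (m : E → ℝ) (hm : ∀ η, m η = ⟪η, g⟫ + 1 / 2 * ⟪η, H η⟫) :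
    ∃ u : E, ‖u‖ = 1 ∧ ⟪u, g⟫ ≤ 0 ∧ ⟪u, H u⟫ < -εH ∧
      m 0 - m (Δ • u) ≥ 1 / 2 * Δ ^ 2 * εH :=
  stmt8_general g Δ εH hΔ H hneg m hm
end

section
/- Let E be a real inner product space, f̂ : E → ℝ, g, η ∈ E, H : E → E, and constants L_g ≥ 0, c₀ > 0, c₂ > 0, ε_g > 0, Δ > 0. Set λ_g = (1/4)·min(1/c₀, c₂/(L_g + c₀)) and m(ξ) = f̂(0) + ⟪ξ, g⟫ + (1/2)⟪ξ, H(ξ)⟫. Assume: ‖η‖ ≤ Δ ≤ 4λ_g ε_g; |f̂(η) − f̂(0) − ⟪η, g⟫| ≤ (L_g/2)‖η‖²; |⟪η, H(η)⟫| ≤ c₀‖η‖²; and m(0) − m(η) ≥ c₂·min(Δ, ε_g/c₀)·ε_g. Then the ratio ρ = (f̂(0) − f̂(η))/(m(0) − m(η)) satisfies |ρ − 1| ≤ 1/2; in particular ρ ≥ 1/2. -/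
open RealInnerProductSpace

/-! The actual and predicted decreases differ by at most `(L_g + c₀)/2 ‖η‖²` (first-order Taylor
bound plus the curvature term of the model). Since `Δ ≤ 4 λ_g ε_g` forces `Δ ≤ ε_g / c₀`, the Cauchy
decrease is at least `c₂ Δ ε_g`, and `(L_g + c₀) Δ ≤ c₂ ε_g` makes the discrepancy at most half of it. -/

theorem abs_div_sub_one_le_of_abs_sub_le {N D r : ℝ} (hD : 0 < D) (h : |N - D| ≤ r * D) :
    |N / D - 1| ≤ r := by
  rwa [div_sub_one hD.ne', abs_div, abs_of_pos hD, div_le_iff₀ hD]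

theorem abs_sub_model_decrease_le {E : Type*} [NormedAddCommGroup E] [InnerProductSpace ℝ E]
    (f : E → ℝ) (g η : E) (H : E → E) (m : E → ℝ) (L c : ℝ)
    (hm : ∀ ξ, m ξ = f 0 + ⟪ξ, g⟫ + 1 / 2 * ⟪ξ, H ξ⟫)
    (hlip : |f η - f 0 - ⟪η, g⟫| ≤ L / 2 * ‖η‖ ^ 2) (hH : |⟪η, H η⟫| ≤ c * ‖η‖ ^ 2) :
    |(f 0 - f η) - (m 0 - m η)| ≤ (L + c) / 2 * ‖η‖ ^ 2 := by
  have hdec : m 0 - m η = -(⟪η, g⟫ + 1 / 2 * ⟪η, H η⟫) := by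
    rw [hm, hm, inner_zero_left, inner_zero_left]
    ring
  obtain ⟨hlip₁, hlip₂⟩ := abs_le.mp hlip
  obtain ⟨hH₁, hH₂⟩ := abs_le.mp hH
  rw [hdec, abs_le]
  constructor <;> linarith

theorem stmt9 {E : Type*} [NormedAddCommGroup E] [InnerProductSpace ℝ E]
    (fhat : E → ℝ) (g η : E) (H : E → E)
    (Lg c₀ c₂ εg Δ : ℝ)
    (hLg : 0 ≤ Lg) (hc₀ : 0 < c₀) (hc₂ : 0 < c₂) (hεg : 0 < εg) (hΔ : 0 < Δ)
    (lamg : ℝ) (hlamg : lamg = 1 / 4 * min (1 / c₀) (c₂ / (Lg + c₀)))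
    (m : E → ℝ) (hm : ∀ ξ, m ξ = fhat 0 + ⟪ξ, g⟫ + 1 / 2 * ⟪ξ, H ξ⟫)
    (hηΔ : ‖η‖ ≤ Δ) (hΔsmall : Δ ≤ 4 * lamg * εg)
    (hlip : |fhat η - fhat 0 - ⟪η, g⟫| ≤ Lg / 2 * ‖η‖ ^ 2)
    (hH : |⟪η, H η⟫| ≤ c₀ * ‖η‖ ^ 2)
    (hdec : m 0 - m η ≥ c₂ * min Δ (εg / c₀) * εg) :
    |(fhat 0 - fhat η) / (m 0 - m η) - 1| ≤ 1 / 2 ∧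
      (fhat 0 - fhat η) / (m 0 - m η) ≥ 1 / 2 := by
  have hL : 0 < Lg + c₀ := by linarith
  have hΔmin : Δ ≤ min (1 / c₀) (c₂ / (Lg + c₀)) * εg := by rw [hlamg] at hΔsmall; linarith
  have hΔc₀ : Δ ≤ εg / c₀ := by
    rw [← one_div_mul_eq_div]
    exact hΔmin.trans (by gcongr; exact min_le_left _ _)
  have hΔL : (Lg + c₀) * Δ ≤ c₂ * εg := by
    have hΔ' : Δ ≤ c₂ * εg / (Lg + c₀) := by
      rw [mul_div_right_comm]
      exact hΔmin.trans (by gcongr; exact min_le_right _ _)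
    rwa [le_div_iff₀ hL, mul_comm] at hΔ'
  rw [min_eq_left hΔc₀] at hdec
  have hpos : 0 < m 0 - m η := hdec.trans_lt' (by positivity)
  have hclose : |(fhat 0 - fhat η) - (m 0 - m η)| ≤ 1 / 2 * (m 0 - m η) :=
    calc _ ≤ (Lg + c₀) / 2 * ‖η‖ ^ 2 := abs_sub_model_decrease_le fhat g η H m Lg c₀ hm hlip hH
      _ ≤ (Lg + c₀) / 2 * Δ ^ 2 := by gcongr
      _ ≤ 1 / 2 * (c₂ * Δ * εg) := by nlinarith
      _ ≤ 1 / 2 * (m 0 - m η) := by linarith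
  have hρ := abs_div_sub_one_le_of_abs_sub_le hpos hclose
  exact ⟨hρ, by linarith [(abs_le.mp hρ).1]⟩
end

section
/- Let f⋆ ∈ ℝ, ρ' > 0, c₂ > 0, c₀ > 0, λ_g > 0 with λ_g ≤ 1/c₀, and ε_g > 0. Let N ∈ ℕ, let φ : ℕ → ℝ and Δ : ℕ → ℝ be sequences, and let S ⊆ {0, …, N}. Assume: φ_k ≥ f⋆ for all k; φ_{k+1} = φ_k for every k ∈ {0, …, N} not in S; and for every k ∈ S, Δ_k ≥ λ_g ε_g and φ_k − φ_{k+1} ≥ ρ'·c₂·min(Δ_k, ε_g/c₀)·ε_g. Then the number of elements of S satisfies |S| ≤ (φ_0 − f⋆)/(ρ' c₂ λ_g ε_g²). -/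
/-!
On a successful iteration `λ_g ε_g ≤ min (Δ_k, ε_g / c₀)` because `λ_g ≤ 1 / c₀`, so `φ` drops by at
least `ρ' c₂ λ_g ε_g²`; on the other iterations it does not move. Telescoping over `0, …, N` then
bounds `|S| · ρ' c₂ λ_g ε_g²` by `φ 0 - φ (N + 1) ≤ φ 0 - f⋆`.
-/

open Finset

theorem sum_sub_succ_eq_of_stationary_off {α : Type*} [AddCommGroup α] {φ : ℕ → α}
    {S : Finset ℕ} {N : ℕ}
    (hS : ∀ k ∈ S, k ≤ N) (hstat : ∀ k ≤ N, k ∉ S → φ (k + 1) = φ k) :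
    ∑ k ∈ S, (φ k - φ (k + 1)) = φ 0 - φ (N + 1) := by
  rw [← sum_range_sub' φ (N + 1)]
  refine sum_subset (fun k hk => mem_range.2 (Nat.lt_succ_of_le (hS k hk))) ?_
  intro k hk hkS
  rw [hstat k (Nat.le_of_lt_succ (mem_range.1 hk)) hkS, sub_self]

theorem card_nsmul_le_sub_of_stationary_off {α : Type*} [AddCommGroup α] [PartialOrder α]
    [IsOrderedAddMonoid α] {φ : ℕ → α} {S : Finset ℕ} {N : ℕ} {c : α}
    (hS : ∀ k ∈ S, k ≤ N) (hstat : ∀ k ≤ N, k ∉ S → φ (k + 1) = φ k)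
    (hdec : ∀ k ∈ S, c ≤ φ k - φ (k + 1)) :
    S.card • c ≤ φ 0 - φ (N + 1) :=
  sum_sub_succ_eq_of_stationary_off hS hstat ▸ card_nsmul_le_sum S _ c hdec

theorem cauchy_decrease_ge_of_radius_ge {ρ' c₂ c₀ lamg εg Δ : ℝ}
    (hρ' : 0 ≤ ρ') (hc₂ : 0 ≤ c₂) (hlamg' : lamg ≤ 1 / c₀) (hεg : 0 ≤ εg)
    (hΔ : lamg * εg ≤ Δ) :
    ρ' * c₂ * lamg * εg ^ 2 ≤ ρ' * c₂ * min Δ (εg / c₀) * εg := by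
  have hmin : lamg * εg ≤ min Δ (εg / c₀) :=
    le_min hΔ (by simpa [div_eq_inv_mul] using mul_le_mul_of_nonneg_right hlamg' hεg)
  calc ρ' * c₂ * lamg * εg ^ 2 = ρ' * c₂ * (lamg * εg) * εg := by ring
    _ ≤ ρ' * c₂ * min Δ (εg / c₀) * εg := by gcongr

theorem stmt12_general (fstar ρ' c₂ c₀ lamg εg : ℝ)
    (hρ' : 0 < ρ') (hc₂ : 0 < c₂) (hlamg : 0 < lamg)
    (hlamg' : lamg ≤ 1 / c₀) (hεg : 0 < εg)
    (N : ℕ) (φ Δ : ℕ → ℝ) (S : Finset ℕ) (hS : ∀ k ∈ S, k ≤ N)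
    (hlb : ∀ k, fstar ≤ φ k)
    (hfail : ∀ k ≤ N, k ∉ S → φ (k + 1) = φ k)
    (hsucc : ∀ k ∈ S, Δ k ≥ lamg * εg ∧
      φ k - φ (k + 1) ≥ ρ' * c₂ * min (Δ k) (εg / c₀) * εg) :
    (S.card : ℝ) ≤ (φ 0 - fstar) / (ρ' * c₂ * lamg * εg ^ 2) := by
  have hdec : ∀ k ∈ S, ρ' * c₂ * lamg * εg ^ 2 ≤ φ k - φ (k + 1) := fun k hk =>
    (cauchy_decrease_ge_of_radius_ge hρ'.le hc₂.le hlamg' hεg.le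
      (hsucc k hk).1).trans (hsucc k hk).2
  have htotal := card_nsmul_le_sub_of_stationary_off hS hfail hdec
  rw [nsmul_eq_mul] at htotal
  rw [le_div_iff₀ (by positivity)]
  linarith [hlb (N + 1)]

theorem stmt12 (fstar ρ' c₂ c₀ lamg εg : ℝ)
    (hρ' : 0 < ρ') (hc₂ : 0 < c₂) (hc₀ : 0 < c₀) (hlamg : 0 < lamg)
    (hlamg' : lamg ≤ 1 / c₀) (hεg : 0 < εg)
    (N : ℕ) (φ Δ : ℕ → ℝ) (S : Finset ℕ) (hS : ∀ k ∈ S, k ≤ N)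
    (hlb : ∀ k, fstar ≤ φ k)
    (hfail : ∀ k ≤ N, k ∉ S → φ (k + 1) = φ k)
    (hsucc : ∀ k ∈ S, Δ k ≥ lamg * εg ∧
      φ k - φ (k + 1) ≥ ρ' * c₂ * min (Δ k) (εg / c₀) * εg) :
    (S.card : ℝ) ≤ (φ 0 - fstar) / (ρ' * c₂ * lamg * εg ^ 2) :=
  stmt12_general fstar ρ' c₂ c₀ lamg εg hρ' hc₂ hlamg hlamg' hεg N φ Δ S hS hlb hfail hsucc
end

section
/- Let f⋆ ∈ ℝ, ρ' > 0, c₂ > 0, c₃ > 0, c₀ > 0, λ_g > 0, λ_H > 0, ε_g > 0, ε_H > 0, with λ_g ≤ 1/c₀, ε_g ≤ (c₂/c₃)·λ_H/λ_g², and ε_H ≤ (c₂/c₃)·(1/λ_g). Let N ∈ ℕ, φ : ℕ → ℝ, Δ : ℕ → ℝ, and S ⊆ {0, …, N}. Assume: φ_k ≥ f⋆ for all k; φ_{k+1} = φ_k for every k ∈ {0, …, N} not in S; and for every k ∈ S, Δ_k ≥ min(λ_g ε_g, λ_H ε_H) and φ_k − φ_{k+1} ≥ ρ'·min( c₂·min(Δ_k,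 ε_g/c₀)·ε_g , c₃·Δ_k²·ε_H ). Then |S| ≤ (φ_0 − f⋆)/( ρ'·c₃·min(λ_g ε_g, λ_H ε_H)²·ε_H ). -/
/-! Every successful iteration has radius at least `m = min (λ_g ε_g) (λ_H ε_H)`, and the
constraints on `ε_H` and `λ_g` make the eigenstep term `c₃ m² ε_H` the smaller of the two
model decreases at that radius. So each successful step lowers `φ` by at least
`ρ' c₃ m² ε_H`, unsuccessful steps leave it unchanged, and since `φ` stays above `f⋆`, the total
decrease `φ 0 - f⋆` bounds the number of successful steps. -/

open Finset

theorem card_mul_le_sub_of_le_sub {φ : ℕ → ℝ} {S : Finset ℕ} {N : ℕ} {δ : ℝ}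
    (hS : ∀ k ∈ S, k ≤ N) (hoff : ∀ k ≤ N, k ∉ S → φ (k + 1) ≤ φ k)
    (hon : ∀ k ∈ S, δ ≤ φ k - φ (k + 1)) :
    (S.card : ℝ) * δ ≤ φ 0 - φ (N + 1) := by
  have hsub : S ⊆ range (N + 1) := fun k hk => mem_range.2 (Nat.lt_succ_of_le (hS k hk))
  calc (S.card : ℝ) * δ = S.card • δ := (nsmul_eq_mul _ _).symm
    _ ≤ ∑ k ∈ S, (φ k - φ (k + 1)) := card_nsmul_le_sum _ _ _ hon
    _ ≤ ∑ k ∈ range (N + 1), (φ k - φ (k + 1)) :=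
        sum_le_sum_of_subset_of_nonneg hsub fun k hk hkS =>
          sub_nonneg.2 (hoff k (Nat.lt_succ_iff.1 (mem_range.1 hk)) hkS)
    _ = φ 0 - φ (N + 1) := sum_range_sub' φ (N + 1)

theorem mul_sq_mul_le_min_model_decrease {c₂ c₃ c₀ εg εH m Δ : ℝ}
    (hc₃ : 0 ≤ c₃) (hεH : 0 ≤ εH) (hm : 0 ≤ m) (hmΔ : m ≤ Δ) (hm_cauchy : m ≤ εg / c₀)
    (hm_grad : c₃ * m * εH ≤ c₂ * εg) :
    c₃ * m ^ 2 * εH ≤ min (c₂ * min Δ (εg / c₀) * εg) (c₃ * Δ ^ 2 * εH) := by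
  refine le_min ?_ (by gcongr)
  have hgrad_nonneg : 0 ≤ c₂ * εg := le_trans (by positivity) hm_grad
  calc c₃ * m ^ 2 * εH = (c₃ * m * εH) * m := by ring
    _ ≤ (c₂ * εg) * min Δ (εg / c₀) := mul_le_mul hm_grad (le_min hmΔ hm_cauchy) hm hgrad_nonneg
    _ = c₂ * min Δ (εg / c₀) * εg := by ring

theorem stmt13_general (fstar ρ' c₂ c₃ c₀ lamg lamH εg εH : ℝ)
    (hρ' : 0 < ρ') (hc₃ : 0 < c₃)
    (hlamg : 0 < lamg) (hlamH : 0 < lamH) (hεg : 0 < εg) (hεH : 0 < εH)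
    (hlamg' : lamg ≤ 1 / c₀)
    (hεH' : εH ≤ (c₂ / c₃) * (1 / lamg))
    (N : ℕ) (φ Δ : ℕ → ℝ) (S : Finset ℕ) (hS : ∀ k ∈ S, k ≤ N)
    (hlb : ∀ k, fstar ≤ φ k)
    (hfail : ∀ k ≤ N, k ∉ S → φ (k + 1) = φ k)
    (hsucc : ∀ k ∈ S, Δ k ≥ min (lamg * εg) (lamH * εH) ∧
      φ k - φ (k + 1) ≥
        ρ' * min (c₂ * min (Δ k) (εg / c₀) * εg) (c₃ * (Δ k) ^ 2 * εH)) :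
    (S.card : ℝ) ≤ (φ 0 - fstar) / (ρ' * c₃ * (min (lamg * εg) (lamH * εH)) ^ 2 * εH) := by
  set m := min (lamg * εg) (lamH * εH)
  have hm : 0 < m := lt_min (by positivity) (by positivity)
  have hm_le : m ≤ lamg * εg := min_le_left _ _
  have hm_cauchy : m ≤ εg / c₀ := by
    calc m ≤ lamg * εg := hm_le
      _ ≤ 1 / c₀ * εg := by gcongr
      _ = εg / c₀ := by ring
  have hm_grad : c₃ * m * εH ≤ c₂ * εg := by
    have hεH_grad : c₃ * lamg * εH ≤ c₂ := by
      calc c₃ * lamg * εH ≤ c₃ * lamg * ((c₂ / c₃) * (1 / lamg)) := by gcongr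
        _ = c₂ := by field_simp
    calc c₃ * m * εH ≤ c₃ * (lamg * εg) * εH := by gcongr
      _ = (c₃ * lamg * εH) * εg := by ring
      _ ≤ c₂ * εg := by gcongr
  have hstep : ∀ k ∈ S, ρ' * c₃ * m ^ 2 * εH ≤ φ k - φ (k + 1) := fun k hk => by
    obtain ⟨hΔ, hdec⟩ := hsucc k hk
    have := mul_sq_mul_le_min_model_decrease hc₃.le hεH.le hm.le hΔ hm_cauchy hm_grad
    calc ρ' * c₃ * m ^ 2 * εH = ρ' * (c₃ * m ^ 2 * εH) := by ring
      _ ≤ _ := by gcongr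
      _ ≤ _ := hdec
  have htotal := card_mul_le_sub_of_le_sub hS (fun k hk hkS => (hfail k hk hkS).le) hstep
  rw [le_div_iff₀ (by positivity)]
  linarith [hlb (N + 1)]

theorem stmt13 (fstar ρ' c₂ c₃ c₀ lamg lamH εg εH : ℝ)
    (hρ' : 0 < ρ') (hc₂ : 0 < c₂) (hc₃ : 0 < c₃) (hc₀ : 0 < c₀)
    (hlamg : 0 < lamg) (hlamH : 0 < lamH) (hεg : 0 < εg) (hεH : 0 < εH)
    (hlamg' : lamg ≤ 1 / c₀)
    (hεg' : εg ≤ (c₂ / c₃) * lamH / lamg ^ 2)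
    (hεH' : εH ≤ (c₂ / c₃) * (1 / lamg))
    (N : ℕ) (φ Δ : ℕ → ℝ) (S : Finset ℕ) (hS : ∀ k ∈ S, k ≤ N)
    (hlb : ∀ k, fstar ≤ φ k)
    (hfail : ∀ k ≤ N, k ∉ S → φ (k + 1) = φ k)
    (hsucc : ∀ k ∈ S, Δ k ≥ min (lamg * εg) (lamH * εH) ∧
      φ k - φ (k + 1) ≥
        ρ' * min (c₂ * min (Δ k) (εg / c₀) * εg) (c₃ * (Δ k) ^ 2 * εH)) :
    (S.card : ℝ) ≤ (φ 0 - fstar) / (ρ' * c₃ * (min (lamg * εg) (lamH * εH)) ^ 2 * εH) :=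
  stmt13_general fstar ρ' c₂ c₃ c₀ lamg lamH εg εH hρ' hc₃ hlamg hlamH hεg hεH hlamg' hεH' N φ Δ S
    hS hlb hfail hsucc
end

section
/- Let Δ : ℕ → ℝ be a sequence of positive reals with Δ_0 > 0, let c > 0, and let N ∈ ℕ. Let S ⊆ {0, …, N} and U = {0, …, N} \ S. Assume Δ_{k+1} ≤ 2Δ_k for every k ∈ S, Δ_{k+1} ≤ Δ_k/4 for every k ∈ U, and Δ_{N+1} ≥ min(Δ_0, c). Then |S| ≥ (2/3)(N + 1) − (1/3)·max(0, log₂(Δ_0/c)). -/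
/-!
Each successful step multiplies the radius by at most `2` and each unsuccessful one by at most
`1/4`, so `Δ_{N+1} · 4^|U| ≤ Δ_0 · 2^|S|`. With `Δ_{N+1} ≥ min(Δ_0, c)` this gives
`2|U| - |S| ≤ log₂(Δ_0 / min(Δ_0, c)) = max(0, log₂(Δ_0/c))`, and `|U| = N + 1 - |S|`.
-/

open Finset

theorem mul_pow_card_sdiff_le_mul_pow_card_inter {a b : ℝ} (ha : 0 ≤ a) (hb : 0 < b)
    (Δ : ℕ → ℝ) (S : Finset ℕ) (n : ℕ)
    (hsucc : ∀ k < n, k ∈ S → Δ (k + 1) ≤ a * Δ k)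
    (hfail : ∀ k < n, k ∉ S → Δ (k + 1) ≤ Δ k / b) :
    Δ n * b ^ #(range n \ S) ≤ Δ 0 * a ^ #(range n ∩ S) := by
  induction n with
  | zero => simp
  | succ n ih =>
    have IH := ih (fun k hk => hsucc k (by omega)) (fun k hk => hfail k (by omega))
    rw [range_add_one]
    by_cases hn : n ∈ S
    · rw [insert_sdiff_of_mem _ hn, insert_inter_of_mem hn, card_insert_of_notMem (by simp),
        pow_succ']
      calc Δ (n + 1) * b ^ #(range n \ S) ≤ a * Δ n * b ^ #(range n \ S) := by
            gcongr; exact hsucc n (by omega) hn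
        _ = a * (Δ n * b ^ #(range n \ S)) := by ring
        _ ≤ a * (Δ 0 * a ^ #(range n ∩ S)) := by gcongr
        _ = Δ 0 * (a * a ^ #(range n ∩ S)) := by ring
    · rw [insert_sdiff_of_notMem _ hn, insert_inter_of_notMem hn, card_insert_of_notMem (by simp),
        pow_succ']
      have hstep : Δ (n + 1) * b ≤ Δ n := (le_div_iff₀ hb).1 (hfail n (by omega) hn)
      calc Δ (n + 1) * (b * b ^ #(range n \ S)) = Δ (n + 1) * b * b ^ #(range n \ S) := by ring
        _ ≤ Δ n * b ^ #(range n \ S) := by gcongr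
        _ ≤ Δ 0 * a ^ #(range n ∩ S) := IH

theorem sub_le_max_zero_logb_of_min_mul_pow_le {b d c : ℝ} (hb : 1 < b) (hd : 0 < d) (hc : 0 < c)
    {m n : ℕ} (h : min d c * b ^ m ≤ d * b ^ n) :
    (m - n : ℝ) ≤ max 0 (Real.logb b (d / c)) := by
  rcases le_total d c with hdc | hcd
  · rw [min_eq_left hdc] at h
    have hmn : m ≤ n := (pow_le_pow_iff_right₀ hb).1 (le_of_mul_le_mul_left h hd)
    exact le_max_of_le_left (sub_nonpos.2 (by exact_mod_cast hmn))
  · rw [min_eq_right hcd] at h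
    refine le_max_of_le_right ((Real.le_logb_iff_rpow_le hb (div_pos hd hc)).2 ?_)
    rw [Real.rpow_sub (by linarith), Real.rpow_natCast, Real.rpow_natCast,
      div_le_div_iff₀ (by positivity) hc]
    linarith

theorem stmt14 (Δ : ℕ → ℝ) (hpos : ∀ k, 0 < Δ k) (c : ℝ) (hc : 0 < c) (N : ℕ)
    (S : Finset ℕ) (hS : S ⊆ Finset.range (N + 1))
    (hsucc : ∀ k ∈ S, Δ (k + 1) ≤ 2 * Δ k)
    (hfail : ∀ k ∈ Finset.range (N + 1) \ S, Δ (k + 1) ≤ Δ k / 4)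
    (hfinal : Δ (N + 1) ≥ min (Δ 0) c) :
    (S.card : ℝ) ≥ 2 / 3 * (N + 1) - 1 / 3 * max 0 (Real.logb 2 (Δ 0 / c)) := by
  have hinter : range (N + 1) ∩ S = S := inter_eq_right.2 hS
  have hcard : (#(range (N + 1) \ S) : ℝ) + #S = N + 1 := by
    have := card_sdiff_add_card_inter (range (N + 1)) S
    rw [hinter, card_range] at this
    exact_mod_cast this
  have hprod := mul_pow_card_sdiff_le_mul_pow_card_inter (a := 2) (b := 4) (by norm_num)
    (by norm_num) Δ S (N + 1) (fun k _ hk => hsucc k hk)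
    (fun k hk hkS => hfail k (mem_sdiff.2 ⟨mem_range.2 hk, hkS⟩))
  rw [hinter] at hprod
  have hmin : min (Δ 0) c * 2 ^ (2 * #(range (N + 1) \ S)) ≤ Δ 0 * 2 ^ #S := by
    rw [pow_mul, show (2 : ℝ) ^ 2 = 4 by norm_num]
    exact (mul_le_mul_of_nonneg_right hfinal (by positivity)).trans hprod
  have hlog := sub_le_max_zero_logb_of_min_mul_pow_le one_lt_two (hpos 0) hc hmin
  push_cast at hlog
  linarith
end

section
/- Let f⋆ ∈ ℝ, ρ' > 0, c₂ > 0, λ_g > 0, ε_g > 0, Δ_0 > 0 with λ_g ε_g ≤ Δ_0. Let N ∈ ℕ, φ : ℕ → ℝ, Δ : ℕ → ℝ with Δ(0) = Δ_0 and Δ_k > 0 for all k, and S ⊆ {0, …, N}. Assume: φ_k ≥ f⋆ for all k; for every k ∈ S, φ_k − φ_{k+1} ≥ ρ'·c₂·λ_g·ε_g² and Δ_{k+1} ≤ 2Δ_k; for every k ∈ {0, …, N} not in S, φ_{k+1} = φ_k and Δ_{k+1} ≤ Δ_k/4; and Δ_{N+1} ≥ λ_g ε_g. Then N + 1 ≤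 (3/2)·(φ_0 − f⋆)/(ρ' c₂ λ_g ε_g²) + (1/2)·log₂(Δ_0/(λ_g ε_g)). -/
/-!
Both potentials, the function value and `log₂` of the trust-region radius, change by a controlled
amount at every iteration, so summing the changes bounds them by the number `s` of successful
iterations. The function value drops by `δ = ρ' c₂ λ_g ε_g²` on each success and never rises,
so `s δ ≤ φ₀ - f⋆`. The radius at most doubles on a success and shrinks fourfold otherwise,
so `log₂ Δ_{N+1} - log₂ Δ₀ ≤ s - 2 (N + 1 - s)`, and `Δ_{N+1} ≥ λ_g ε_g` turns this into
`2 (N + 1) ≤ 3 s + log₂ (Δ₀ / (λ_g ε_g))`.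
-/

open Finset

theorem sub_le_sum_range_of_succ_sub_le {G : Type*} [AddCommGroup G] [PartialOrder G]
    [IsOrderedAddMonoid G] {u d : ℕ → G} {n : ℕ} (h : ∀ k < n, u (k + 1) - u k ≤ d k) :
    u n - u 0 ≤ ∑ k ∈ range n, d k := by
  rw [← sum_range_sub]
  exact sum_le_sum fun k hk => h k (mem_range.mp hk)

theorem sum_range_ite_mem_of_subset {R : Type*} [CommRing R] {S : Finset ℕ} {n : ℕ}
    (hS : S ⊆ range n) (a b : R) :
    ∑ k ∈ range n, (if k ∈ S then a else b) = #S * (a - b) + n * b := by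
  have hsplit : ∀ k, (if k ∈ S then a else b) = (if k ∈ S then a - b else 0) + b := by
    intro k; split_ifs <;> ring
  simp only [hsplit, sum_add_distrib, sum_ite_mem, inter_eq_right.mpr hS, sum_const, card_range,
    nsmul_eq_mul]

theorem Real.logb_sub_logb_le_of_le_mul {b x y c : ℝ} (hb : 1 < b) (hx : 0 < x) (hy : 0 < y)
    (hc : 0 < c) (h : y ≤ c * x) : Real.logb b y - Real.logb b x ≤ Real.logb b c := by
  have := Real.logb_le_logb_of_le hb hy h
  rw [Real.logb_mul hc.ne' hx.ne'] at this
  linarith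

theorem card_mul_le_sub_of_drop_on {R : Type*} [CommRing R] [LinearOrder R] [IsStrictOrderedRing R]
    {φ : ℕ → R} {S : Finset ℕ} {n : ℕ} {δ : R} (hS : S ⊆ range n)
    (hsucc : ∀ k ∈ S, δ ≤ φ k - φ (k + 1)) (hfail : ∀ k < n, k ∉ S → φ (k + 1) ≤ φ k) :
    #S * δ ≤ φ 0 - φ n := by
  have hsum := sub_le_sum_range_of_succ_sub_le (u := φ) (d := fun k => if k ∈ S then -δ else 0)
    (n := n) fun k hk => by
      by_cases hkS : k ∈ S
      · rw [if_pos hkS]; linarith [hsucc k hkS]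
      · rw [if_neg hkS]; linarith [hfail k hk hkS]
  rw [sum_range_ite_mem_of_subset hS] at hsum
  linarith

theorem logb_two_sub_le_of_double_on_quarter_off {Δ : ℕ → ℝ} {S : Finset ℕ} {n : ℕ}
    (hS : S ⊆ range n) (hpos : ∀ k, 0 < Δ k) (hsucc : ∀ k ∈ S, Δ (k + 1) ≤ 2 * Δ k)
    (hfail : ∀ k < n, k ∉ S → Δ (k + 1) ≤ Δ k / 4) :
    Real.logb 2 (Δ n) - Real.logb 2 (Δ 0) ≤ 3 * #S - 2 * n := by
  have hquarter : Real.logb 2 (1 / 4) = -2 := by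
    rw [one_div, Real.logb_inv, show (4 : ℝ) = 2 ^ 2 by norm_num, Real.logb_pow,
      Real.logb_self_eq_one one_lt_two]
    norm_num
  have hsum := sub_le_sum_range_of_succ_sub_le (u := fun k => Real.logb 2 (Δ k))
    (d := fun k => if k ∈ S then (1 : ℝ) else -2) (n := n) fun k hk => by
      by_cases hkS : k ∈ S
      · rw [if_pos hkS, ← Real.logb_self_eq_one one_lt_two]
        exact Real.logb_sub_logb_le_of_le_mul one_lt_two (hpos k) (hpos (k + 1)) two_pos
          (hsucc k hkS)
      · rw [if_neg hkS, ← hquarter]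
        exact Real.logb_sub_logb_le_of_le_mul one_lt_two (hpos k) (hpos (k + 1)) (by norm_num)
          (by linarith [hfail k hk hkS])
  rw [sum_range_ite_mem_of_subset hS] at hsum
  linarith

theorem stmt15_general (fstar ρ' c₂ lamg εg Δ₀ : ℝ)
    (hρ' : 0 < ρ') (hc₂ : 0 < c₂) (hlamg : 0 < lamg) (hεg : 0 < εg)
    (N : ℕ) (φ Δ : ℕ → ℝ) (hΔ0 : Δ 0 = Δ₀) (hpos : ∀ k, 0 < Δ k)
    (S : Finset ℕ) (hS : ∀ k ∈ S, k ≤ N)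
    (hlb : ∀ k, fstar ≤ φ k)
    (hsucc : ∀ k ∈ S, φ k - φ (k + 1) ≥ ρ' * c₂ * lamg * εg ^ 2 ∧ Δ (k + 1) ≤ 2 * Δ k)
    (hfail : ∀ k ≤ N, k ∉ S → φ (k + 1) = φ k ∧ Δ (k + 1) ≤ Δ k / 4)
    (hfinal : Δ (N + 1) ≥ lamg * εg) :
    (N + 1 : ℝ) ≤ 3 / 2 * (φ 0 - fstar) / (ρ' * c₂ * lamg * εg ^ 2)
      + 1 / 2 * Real.logb 2 (Δ₀ / (lamg * εg)) := by
  set δ := ρ' * c₂ * lamg * εg ^ 2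
  have hSN : S ⊆ range (N + 1) := fun k hk => mem_range.mpr (Nat.lt_succ_of_le (hS k hk))
  have hdecrease : #S * δ ≤ φ 0 - φ (N + 1) :=
    card_mul_le_sub_of_drop_on hSN (fun k hk => (hsucc k hk).1)
      fun k hk hkS => (hfail k (Nat.lt_succ_iff.mp hk) hkS).1.le
  have hradius := logb_two_sub_le_of_double_on_quarter_off hSN hpos (fun k hk => (hsucc k hk).2)
    fun k hk hkS => (hfail k (Nat.lt_succ_iff.mp hk) hkS).2
  have hcount : (#S : ℝ) ≤ (φ 0 - fstar) / δ := by
    rw [le_div_iff₀ (by positivity)]; linarith [hlb (N + 1)]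
  have hfinal_log : Real.logb 2 (lamg * εg) ≤ Real.logb 2 (Δ (N + 1)) :=
    Real.logb_le_logb_of_le one_lt_two (by positivity) hfinal
  rw [mul_div_assoc, Real.logb_div (hΔ0 ▸ hpos 0).ne' (by positivity), ← hΔ0]
  push_cast at hradius
  linarith

theorem stmt15 (fstar ρ' c₂ lamg εg Δ₀ : ℝ)
    (hρ' : 0 < ρ') (hc₂ : 0 < c₂) (hlamg : 0 < lamg) (hεg : 0 < εg) (hΔ₀ : 0 < Δ₀)
    (hinit : lamg * εg ≤ Δ₀)
    (N : ℕ) (φ Δ : ℕ → ℝ) (hΔ0 : Δ 0 = Δ₀) (hpos : ∀ k, 0 < Δ k)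
    (S : Finset ℕ) (hS : ∀ k ∈ S, k ≤ N)
    (hlb : ∀ k, fstar ≤ φ k)
    (hsucc : ∀ k ∈ S, φ k - φ (k + 1) ≥ ρ' * c₂ * lamg * εg ^ 2 ∧ Δ (k + 1) ≤ 2 * Δ k)
    (hfail : ∀ k ≤ N, k ∉ S → φ (k + 1) = φ k ∧ Δ (k + 1) ≤ Δ k / 4)
    (hfinal : Δ (N + 1) ≥ lamg * εg) :
    (N + 1 : ℝ) ≤ 3 / 2 * (φ 0 - fstar) / (ρ' * c₂ * lamg * εg ^ 2)
      + 1 / 2 * Real.logb 2 (Δ₀ / (lamg * εg)) :=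
  stmt15_general fstar ρ' c₂ lamg εg Δ₀ hρ' hc₂ hlamg hεg N φ Δ hΔ0 hpos S hS hlb hsucc hfail hfinal
end

section
/- Let f⋆ ∈ ℝ, ρ' > 0, c₃ > 0, ε_H > 0, Δ_0 > 0, and c > 0 with c ≤ Δ_0. Let N ∈ ℕ, φ : ℕ → ℝ, Δ : ℕ → ℝ with Δ(0) = Δ_0 and Δ_k > 0 for all k, and S ⊆ {0, …, N}. Assume: φ_k ≥ f⋆ for all k; for every k ∈ S, φ_k − φ_{k+1} ≥ ρ'·c₃·c²·ε_H and Δ_{k+1} ≤ 2Δ_k; for every k ∈ {0, …, N} not in S, φ_{k+1} = φ_k and Δ_{k+1} ≤ Δ_k/4; and Δ_{N+1} ≥ c. Then N + 1 ≤ (3/2)·(φ_0 − f⋆)/(ρ' c₃ c² ε_H) + (1/2)·log₂(Δ_0/c). -/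
/-!
Let `m` and `u` count the successful and the unsuccessful iterations among the first `N + 1`.
Every success lowers `f` by at least `ρ' c₃ c² ε_H` and `f` stays above `f⋆`, so
`m ≤ (φ₀ - f⋆) / (ρ' c₃ c² ε_H)`. On the scale `log₂ Δ` a success raises the radius by at most `1`
and a failure lowers it by at least `2`, so `log₂ Δ_{N+1} ≤ log₂ Δ₀ + m - 2u`; as `Δ_{N+1} ≥ c`,
this gives `2u - m ≤ log₂ (Δ₀ / c)`. Hence `N + 1 = m + u ≤ (3/2) m + (1/2) log₂ (Δ₀ / c)`.
-/

open Finset Real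

lemma sum_range_le_sub_of_le_sub {a b : ℕ → ℝ} {n : ℕ} (h : ∀ k < n, b k ≤ a k - a (k + 1)) :
    ∑ k ∈ range n, b k ≤ a 0 - a n :=
  sum_range_sub' a n ▸ sum_le_sum fun k hk ↦ h k (mem_range.1 hk)

lemma sum_range_ite_mem (S : Finset ℕ) (n : ℕ) (x y : ℝ) :
    ∑ k ∈ range n, (if k ∈ S then x else y) =
      #{k ∈ range n | k ∈ S} * x + #{k ∈ range n | k ∉ S} * y := by
  rw [sum_ite, sum_const, sum_const, nsmul_eq_mul, nsmul_eq_mul]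

lemma logb_le_logb_add_of_le_rpow_mul {b x y t : ℝ} (hb : 1 < b) (hy : 0 < y)
    (h : y ≤ b ^ t * x) : logb b y ≤ logb b x + t := by
  have hbt : 0 < b ^ t := rpow_pos_of_pos (by linarith) t
  have hx : 0 < x := pos_of_mul_pos_right (hy.trans_le h) hbt.le
  calc logb b y ≤ logb b (b ^ t * x) := logb_le_logb_of_le hb hy h
    _ = logb b x + t := by
      rw [logb_mul hbt.ne' hx.ne', logb_rpow (by linarith) hb.ne', add_comm]

lemma card_filter_mem_mul_le_sub {φ : ℕ → ℝ} {S : Finset ℕ} {n : ℕ} {d : ℝ}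
    (hsucc : ∀ k ∈ S, d ≤ φ k - φ (k + 1)) (hfail : ∀ k < n, k ∉ S → φ (k + 1) = φ k) :
    #{k ∈ range n | k ∈ S} * d ≤ φ 0 - φ n := by
  have h := sum_range_le_sub_of_le_sub (a := φ) (b := fun k ↦ if k ∈ S then d else 0) (n := n)
    fun k hk ↦ by
      split_ifs with hkS
      · exact hsucc k hkS
      · rw [hfail k hk hkS, sub_self]
  rwa [sum_range_ite_mem, mul_zero, add_zero] at h

lemma two_mul_card_filter_notMem_sub_card_filter_mem_le {Δ : ℕ → ℝ} {S : Finset ℕ} {n : ℕ}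
    (hpos : ∀ k, 0 < Δ k) (hsucc : ∀ k ∈ S, Δ (k + 1) ≤ 2 * Δ k)
    (hfail : ∀ k < n, k ∉ S → Δ (k + 1) ≤ Δ k / 4) :
    2 * #{k ∈ range n | k ∉ S} - #{k ∈ range n | k ∈ S} ≤ logb 2 (Δ 0) - logb 2 (Δ n) := by
  have h := sum_range_le_sub_of_le_sub (a := fun k ↦ logb 2 (Δ k))
    (b := fun k ↦ if k ∈ S then -1 else 2) (n := n) fun k hk ↦ by
      split_ifs with hkS
      · have := logb_le_logb_add_of_le_rpow_mul (t := 1) one_lt_two (hpos (k + 1))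
          (by rw [rpow_one]; exact hsucc k hkS)
        linarith
      · have h4 : (2 : ℝ) ^ (-2 : ℝ) = 1 / 4 := by
          rw [rpow_neg zero_le_two, rpow_two]; norm_num
        have := logb_le_logb_add_of_le_rpow_mul (t := -2) one_lt_two (hpos (k + 1))
          (by rw [h4, one_div_mul_eq_div]; exact hfail k hk hkS)
        linarith
  rw [sum_range_ite_mem] at h
  linarith

theorem stmt16_general (fstar ρ' c₃ εH Δ₀ c : ℝ)
    (hρ' : 0 < ρ') (hc₃ : 0 < c₃) (hεH : 0 < εH) (hΔ₀ : 0 < Δ₀)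
    (hc : 0 < c)
    (N : ℕ) (φ Δ : ℕ → ℝ) (hΔ0 : Δ 0 = Δ₀) (hpos : ∀ k, 0 < Δ k)
    (S : Finset ℕ)
    (hlb : ∀ k, fstar ≤ φ k)
    (hsucc : ∀ k ∈ S, φ k - φ (k + 1) ≥ ρ' * c₃ * c ^ 2 * εH ∧ Δ (k + 1) ≤ 2 * Δ k)
    (hfail : ∀ k ≤ N, k ∉ S → φ (k + 1) = φ k ∧ Δ (k + 1) ≤ Δ k / 4)
    (hfinal : Δ (N + 1) ≥ c) :
    (N + 1 : ℝ) ≤ 3 / 2 * (φ 0 - fstar) / (ρ' * c₃ * c ^ 2 * εH)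
      + 1 / 2 * Real.logb 2 (Δ₀ / c) := by
  set d := ρ' * c₃ * c ^ 2 * εH
  set m := (#{k ∈ range (N + 1) | k ∈ S} : ℝ)
  set u := (#{k ∈ range (N + 1) | k ∉ S} : ℝ)
  have hfail' (k : ℕ) (hk : k < N + 1) := hfail k (Nat.lt_succ_iff.1 hk)
  have hdescent : m * d ≤ φ 0 - fstar :=
    (card_filter_mem_mul_le_sub (fun k hk ↦ (hsucc k hk).1) fun k hk hkS ↦ (hfail' k hk hkS).1).trans
      (by linarith [hlb (N + 1)])
  have hradius : 2 * u - m ≤ logb 2 (Δ₀ / c) :=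
    calc 2 * u - m ≤ logb 2 (Δ 0) - logb 2 (Δ (N + 1)) :=
          two_mul_card_filter_notMem_sub_card_filter_mem_le hpos (fun k hk ↦ (hsucc k hk).2)
            fun k hk hkS ↦ (hfail' k hk hkS).2
      _ ≤ logb 2 Δ₀ - logb 2 c := by
          rw [hΔ0]; linarith [logb_le_logb_of_le one_lt_two hc hfinal]
      _ = logb 2 (Δ₀ / c) := (logb_div hΔ₀.ne' hc.ne').symm
  have hcount : m + u = N + 1 := by
    simp only [m, u]
    exact_mod_cast (card_filter_add_card_filter_not _).trans (card_range (N + 1))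
  have hm : m ≤ (φ 0 - fstar) / d := (le_div_iff₀ (by positivity)).2 hdescent
  rw [mul_div_assoc]
  linarith

theorem stmt16 (fstar ρ' c₃ εH Δ₀ c : ℝ)
    (hρ' : 0 < ρ') (hc₃ : 0 < c₃) (hεH : 0 < εH) (hΔ₀ : 0 < Δ₀)
    (hc : 0 < c) (hcΔ₀ : c ≤ Δ₀)
    (N : ℕ) (φ Δ : ℕ → ℝ) (hΔ0 : Δ 0 = Δ₀) (hpos : ∀ k, 0 < Δ k)
    (S : Finset ℕ) (hS : ∀ k ∈ S, k ≤ N)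
    (hlb : ∀ k, fstar ≤ φ k)
    (hsucc : ∀ k ∈ S, φ k - φ (k + 1) ≥ ρ' * c₃ * c ^ 2 * εH ∧ Δ (k + 1) ≤ 2 * Δ k)
    (hfail : ∀ k ≤ N, k ∉ S → φ (k + 1) = φ k ∧ Δ (k + 1) ≤ Δ k / 4)
    (hfinal : Δ (N + 1) ≥ c) :
    (N + 1 : ℝ) ≤ 3 / 2 * (φ 0 - fstar) / (ρ' * c₃ * c ^ 2 * εH)
      + 1 / 2 * Real.logb 2 (Δ₀ / c) :=
  stmt16_general fstar ρ' c₃ εH Δ₀ c hρ' hc₃ hεH hΔ₀ hc N φ Δ hΔ0 hpos S hlb hsucc hfail hfinal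
end
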